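/- arXiv:math/0611138 — 4 statements merged into one kernel-verified Lean document; each statement's English description precedes it below -/
import Mathlib

section
/- Let (V, Ω) be a 2n-dimensional real symplectic vector space. For a symplectic basis e_1,…,e_n,f_1,…,f_n of V (i.e. Ω(e_i,e_j)=Ω(f_i,f_j)=0 and Ω(e_i,f_j)=δ_ij), define the operator ⊥ from alternating k-forms to alternating (k−2)-forms by ⊥ω = Σ_{i=1}^n ι_{f_i}(ι_{e_i} ω), where ι denotes the interior product. Then the operator ⊥ does not depend on the choice of symplectic basis: if e'_1,…,e'_n,f'_1,…,f'_n is another symplectic basis, then Σ_{i=1}^n ι_{f_i}(ι_{e_i} ω) = Σ_{i=1}^n ι_{f'_i}(ι_{e'_i} ω) for every alternating k-form ω on V. -/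
/-!
For an alternating bilinear form `B`, let `T` be the endomorphism with `Ω (T x) y = B x y`.
Computing its trace in a symplectic basis gives `2 ∑ i, B (e i) (f i)`, because the coordinates
of `x` are `Ω (x, f i)` and `Ω (e i, x)`; since `T` is defined without a basis, so is the sum.
The claim is the case `B x y = ω (x, y, v)`, for every `v`.
-/

open scoped TensorProduct

namespace SymplSS

variable {V : Type*} [AddCommGroup V] [Module ℝ V]

/-- The wedge product of two real-valued alternating forms (shuffle convention, so that
`(dq ∧ dp)(e, f) = dq(e) dp(f) - dq(f) dp(e)`). -/
noncomputable def wedge {k l : ℕ} (ω : V [⋀^Fin k]→ₗ[ℝ] ℝ) (η : V [⋀^Fin l]→ₗ[ℝ] ℝ) :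
    V [⋀^Fin (k + l)]→ₗ[ℝ] ℝ :=
  AlternatingMap.domDomCongr finSumFinEquiv
    ((TensorProduct.lid ℝ ℝ).toLinearMap.compAlternatingMap (ω.domCoprod η))

/-- The operator `⊥ : Λ^k → Λ^(k-2)`, `⊥ω = ∑ i, ι_(f i) (ι_(e i) ω)`;
for forms of degree `< 2` it is `0`. -/
noncomputable def lower {n : ℕ} (e f : Fin n → V) :
    ∀ {k : ℕ}, (V [⋀^Fin k]→ₗ[ℝ] ℝ) → V [⋀^Fin (k - 2)]→ₗ[ℝ] ℝ
  | 0, _ => 0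
  | 1, _ => 0
  | (_ + 2), ω => ∑ i, ((ω.curryLeft (e i)).curryLeft (f i))

/-- A form is *effective* iff `⊥ω = 0`. -/
def IsEff {n : ℕ} (e f : Fin n → V) {k : ℕ} (ω : V [⋀^Fin k]→ₗ[ℝ] ℝ) : Prop :=
  lower e f ω = 0

/-- `e 1, …, e n, f 1, …, f n` is a symplectic basis for the alternating 2-form `Ω`. -/
structure IsSymplecticBasis {n : ℕ} (Ω : V [⋀^Fin 2]→ₗ[ℝ] ℝ) (e f : Fin n → V) : Prop where
  indep : LinearIndependent ℝ (Sum.elim e f)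
  span : Submodule.span ℝ (Set.range (Sum.elim e f)) = ⊤
  ee : ∀ i j, Ω ![e i, e j] = 0
  ff : ∀ i j, Ω ![f i, f j] = 0
  ef : ∀ i j, Ω ![e i, f j] = if i = j then 1 else 0

/-- Nondegeneracy of an alternating 2-form. -/
def Nondeg (Ω : V [⋀^Fin 2]→ₗ[ℝ] ℝ) : Prop :=
  ∀ v : V, (∀ w : V, Ω ![v, w] = 0) → v = 0

/-- The `i`-th wedge power `Ω^{∧ i}` of a 2-form. -/
noncomputable def omegaPow (Ω : V [⋀^Fin 2]→ₗ[ℝ] ℝ) : ∀ i : ℕ, V [⋀^Fin (2 * i)]→ₗ[ℝ] ℝ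
  | 0 => AlternatingMap.constOfIsEmpty ℝ V (Fin 0) 1
  | (i + 1) => wedge (omegaPow Ω i) Ω

/-- Reindexing a form along an equality of degrees. -/
noncomputable def castForm {a b : ℕ} (h : a = b) (ω : V [⋀^Fin a]→ₗ[ℝ] ℝ) :
    V [⋀^Fin b]→ₗ[ℝ] ℝ :=
  AlternatingMap.domDomCongr (finCongr h) ω

/-- `Ω^{∧ i} ∧ η` as a `k`-form, for `η` a `(k - 2i)`-form; it is `0` when `k - 2i < 0`. -/
noncomputable def omegaPowWedge (Ω : V [⋀^Fin 2]→ₗ[ℝ] ℝ) (k i : ℕ)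
    (η : V [⋀^Fin (k - 2 * i)]→ₗ[ℝ] ℝ) : V [⋀^Fin k]→ₗ[ℝ] ℝ :=
  if h : 2 * i ≤ k then castForm (by omega) (wedge (omegaPow Ω i) η) else 0

/-- `Ω ∧ η` as a `k`-form, for `η` a `(k-2)`-form; it is `0` when `k - 2 < 0`. -/
noncomputable def wedgeOmega (Ω : V [⋀^Fin 2]→ₗ[ℝ] ℝ) (k : ℕ)
    (η : V [⋀^Fin (k - 2)]→ₗ[ℝ] ℝ) : V [⋀^Fin k]→ₗ[ℝ] ℝ :=
  if h : 2 ≤ k then castForm (by omega) (wedge Ω η) else 0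

/-- Iterated `⊥`: `⊥^j : Λ^k → Λ^(k - 2j)`. -/
noncomputable def lowerIter {n : ℕ} (e f : Fin n → V) :
    ∀ (j : ℕ) {k : ℕ}, (V [⋀^Fin k]→ₗ[ℝ] ℝ) → V [⋀^Fin (k - 2 * j)]→ₗ[ℝ] ℝ
  | 0, _, ω => ω
  | (j + 1), _, ω => lower e f (lowerIter e f j ω)

/-- The composite `⊤ ∘ ⊥ : Λ^k → Λ^k` (it is `0` in degrees `< 2`, where `⊥ = 0`). -/
noncomputable def raiseLower {n : ℕ} (e f : Fin n → V) (Ω : V [⋀^Fin 2]→ₗ[ℝ] ℝ) :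
    ∀ {k : ℕ}, (V [⋀^Fin k]→ₗ[ℝ] ℝ) → V [⋀^Fin k]→ₗ[ℝ] ℝ
  | 0, _ => 0
  | 1, _ => 0
  | (_ + 2), ω => wedge (lower e f ω) Ω

/-- `⊥` as a linear map. -/
noncomputable def lowerHom {n : ℕ} (e f : Fin n → V) (k : ℕ) :
    (V [⋀^Fin k]→ₗ[ℝ] ℝ) →ₗ[ℝ] (V [⋀^Fin (k - 2)]→ₗ[ℝ] ℝ) where
  toFun := lower e f
  map_add' ω ω' := by
    match k with
    | 0 => simp [lower]
    | 1 => simp [lower]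
    | (m + 2) =>
      show (∑ i, (((ω + ω').curryLeft (e i)).curryLeft (f i))) = _
      simp only [AlternatingMap.curryLeft_add, LinearMap.add_apply, Finset.sum_add_distrib]
      rfl
  map_smul' c ω := by
    match k with
    | 0 => simp [lower]
    | 1 => simp [lower]
    | (m + 2) =>
      show (∑ i, (((c • ω).curryLeft (e i)).curryLeft (f i))) = _
      simp only [AlternatingMap.curryLeft_smul, LinearMap.smul_apply, Finset.smul_sum,
        RingHom.id_apply]
      show _ = c • ∑ i, ((ω.curryLeft (e i)).curryLeft (f i))
      rw [Finset.smul_sum]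

/-- The space `Λ_ε^k` of effective `k`-forms, as a submodule. -/
noncomputable def effSubmodule {n : ℕ} (e f : Fin n → V) (k : ℕ) :
    Submodule ℝ (V [⋀^Fin k]→ₗ[ℝ] ℝ) :=
  LinearMap.ker (lowerHom e f k)

/-- Left wedge with a fixed form, as a linear map. -/
noncomputable def wedgeHom {k : ℕ} (ω : V [⋀^Fin k]→ₗ[ℝ] ℝ) (l : ℕ) :
    (V [⋀^Fin l]→ₗ[ℝ] ℝ) →ₗ[ℝ] (V [⋀^Fin (k + l)]→ₗ[ℝ] ℝ) where
  toFun := wedge ω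
  map_add' η η' := by
    simp only [wedge, ← AlternatingMap.domCoprod'_apply, TensorProduct.tmul_add, map_add,
      LinearMap.compAlternatingMap_add, AlternatingMap.domDomCongr_add]
  map_smul' c η := by
    simp only [wedge, ← AlternatingMap.domCoprod'_apply, TensorProduct.tmul_smul, map_smul,
      LinearMap.compAlternatingMap_smul, AlternatingMap.domDomCongr_smul, RingHom.id_apply]

/-- `castForm` as a linear map. -/
noncomputable def castHom {a b : ℕ} (h : a = b) :
    (V [⋀^Fin a]→ₗ[ℝ] ℝ) →ₗ[ℝ] (V [⋀^Fin b]→ₗ[ℝ] ℝ) :=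
  (AlternatingMap.domDomCongrₗ ℝ (finCongr h)).toLinearMap

/-- The subspace `Ω^{∧ i} ∧ Λ^(k - 2i)` of `Λ^k` (the zero subspace when `k - 2i < 0`). -/
noncomputable def idealPiece (Ω : V [⋀^Fin 2]→ₗ[ℝ] ℝ) (k i : ℕ) :
    Submodule ℝ (V [⋀^Fin k]→ₗ[ℝ] ℝ) :=
  if h : 2 * i ≤ k then
    (LinearMap.range (wedgeHom (omegaPow Ω i) (k - 2 * i))).map (castHom (by omega))
  else ⊥

/-- A Lagrangian subspace of a `2n`-dimensional symplectic vector space. -/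
def IsLagrangian {n : ℕ} (Ω : V [⋀^Fin 2]→ₗ[ℝ] ℝ) (L : Submodule ℝ V) : Prop :=
  Module.finrank ℝ L = n ∧ ∀ u ∈ L, ∀ v ∈ L, Ω ![u, v] = 0

noncomputable def bilinFormAt {k : ℕ} (ω : V [⋀^Fin (k + 2)]→ₗ[ℝ] ℝ) (v : Fin k → V) :
    LinearMap.BilinForm ℝ V :=
  LinearMap.mk₂ ℝ (fun x y => (ω.curryLeft x).curryLeft y v)
    (fun x x' y => by simp) (fun c x y => by simp)
    (fun x y y' => by simp) (fun c x y => by simp)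

@[simp]
lemma bilinFormAt_apply {k : ℕ} (ω : V [⋀^Fin (k + 2)]→ₗ[ℝ] ℝ) (v : Fin k → V) (x y : V) :
    bilinFormAt ω v x y = ω (Matrix.vecCons x (Matrix.vecCons y v)) :=
  rfl

lemma isAlt_bilinFormAt {k : ℕ} (ω : V [⋀^Fin (k + 2)]→ₗ[ℝ] ℝ) (v : Fin k → V) :
    (bilinFormAt ω v).IsAlt := fun x =>
  congrArg (· v) (ω.curryLeft_same x)

lemma sum_curryLeft_curryLeft_apply {k n : ℕ} (ω : V [⋀^Fin (k + 2)]→ₗ[ℝ] ℝ) (e f : Fin n → V)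
    (v : Fin k → V) :
    (∑ i, (ω.curryLeft (e i)).curryLeft (f i)) v = ∑ i, bilinFormAt ω v (e i) (f i) :=
  map_sum (AddMonoidHom.mk' (fun η : V [⋀^Fin k]→ₗ[ℝ] ℝ => η v) fun _ _ => rfl) _ _

namespace IsSymplecticBasis

variable {n : ℕ} {Ω : V [⋀^Fin 2]→ₗ[ℝ] ℝ} {e f : Fin n → V}

noncomputable def basis (hb : IsSymplecticBasis Ω e f) : Module.Basis (Fin n ⊕ Fin n) ℝ V :=
  Module.Basis.mk hb.indep hb.span.ge

@[simp]
lemma basis_inl (hb : IsSymplecticBasis Ω e f) (i : Fin n) : hb.basis (Sum.inl i) = e i := by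
  simp [basis]

@[simp]
lemma basis_inr (hb : IsSymplecticBasis Ω e f) (i : Fin n) : hb.basis (Sum.inr i) = f i := by
  simp [basis]

lemma coord_inl (hb : IsSymplecticBasis Ω e f) (i : Fin n) :
    hb.basis.coord (Sum.inl i) = (bilinFormAt Ω ![]).flip (f i) := by
  refine hb.basis.ext fun j => ?_
  rw [Module.Basis.coord_apply, Module.Basis.repr_self]
  rcases j with j | j <;> simp [Finsupp.single_apply, hb.ef, hb.ff, eq_comm]

lemma coord_inr (hb : IsSymplecticBasis Ω e f) (i : Fin n) :
    hb.basis.coord (Sum.inr i) = bilinFormAt Ω ![] (e i) := by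
  refine hb.basis.ext fun j => ?_
  rw [Module.Basis.coord_apply, Module.Basis.repr_self]
  rcases j with j | j <;> simp [Finsupp.single_apply, hb.ef, hb.ee, eq_comm]

lemma nondegenerate (hb : IsSymplecticBasis Ω e f) : (bilinFormAt Ω ![]).Nondegenerate := by
  refine ((isAlt_bilinFormAt Ω ![]).isRefl.nondegenerate_iff_separatingLeft).2 fun x hx => ?_
  refine hb.basis.forall_coord_eq_zero_iff.1 fun j => ?_
  rcases j with i | i
  · rw [coord_inl]
    exact hx (f i)
  · rw [coord_inr, ← (isAlt_bilinFormAt Ω ![]).neg_eq x (e i), hx, neg_zero]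

lemma trace_symmCompOfNondegenerate [FiniteDimensional ℝ V] (hb : IsSymplecticBasis Ω e f)
    {B : LinearMap.BilinForm ℝ V} (hB : B.IsAlt) :
    LinearMap.trace ℝ V (B.symmCompOfNondegenerate (bilinFormAt Ω ![]) hb.nondegenerate) =
      2 * ∑ i, B (e i) (f i) := by
  set T := B.symmCompOfNondegenerate (bilinFormAt Ω ![]) hb.nondegenerate
  have diag_inl (i : Fin n) : hb.basis.coord (Sum.inl i) (T (e i)) = B (e i) (f i) := by
    rw [coord_inl]
    exact B.symmCompOfNondegenerate_left_apply hb.nondegenerate (f i) (e i)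
  have diag_inr (i : Fin n) : hb.basis.coord (Sum.inr i) (T (f i)) = B (e i) (f i) := by
    rw [coord_inr, ← (isAlt_bilinFormAt Ω ![]).neg_eq,
      LinearMap.BilinForm.symmCompOfNondegenerate_left_apply, hB.neg_eq]
  rw [LinearMap.trace_eq_matrix_trace ℝ hb.basis, Matrix.trace, Fintype.sum_sum_type, two_mul]
  simp only [Matrix.diag_apply, LinearMap.toMatrix_apply, ← Module.Basis.coord_apply, basis_inl,
    basis_inr, diag_inl, diag_inr]

theorem sum_eq_sum_of_isAlt {e' f' : Fin n → V} (hb : IsSymplecticBasis Ω e f)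
    (hb' : IsSymplecticBasis Ω e' f') {B : LinearMap.BilinForm ℝ V} (hB : B.IsAlt) :
    ∑ i, B (e i) (f i) = ∑ i, B (e' i) (f' i) := by
  have : FiniteDimensional ℝ V := Module.Finite.of_basis hb.basis
  have htrace := (hb.trace_symmCompOfNondegenerate hB).symm.trans
    (hb'.trace_symmCompOfNondegenerate hB)
  linarith

end IsSymplecticBasis

theorem lower_independent_of_symplectic_basis_general
    {V : Type*} [AddCommGroup V] [Module ℝ V] {n : ℕ}
    (Ω : V [⋀^Fin 2]→ₗ[ℝ] ℝ)
    {e f e' f' : Fin n → V}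
    (hb : IsSymplecticBasis Ω e f) (hb' : IsSymplecticBasis Ω e' f')
    (k : ℕ) (ω : V [⋀^Fin (k + 2)]→ₗ[ℝ] ℝ) :
    ∑ i, ((ω.curryLeft (e i)).curryLeft (f i)) =
      ∑ i, ((ω.curryLeft (e' i)).curryLeft (f' i)) := by
  ext v
  rw [sum_curryLeft_curryLeft_apply, sum_curryLeft_curryLeft_apply]
  exact hb.sum_eq_sum_of_isAlt hb' (isAlt_bilinFormAt ω v)

/-- The operator `⊥ω = ∑ i, ι_(f i) (ι_(e i) ω)` does not depend on the
choice of symplectic basis of the `2n`-dimensional symplectic vector space `(V, Ω)`. -/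
theorem lower_independent_of_symplectic_basis
    {V : Type*} [AddCommGroup V] [Module ℝ V] [FiniteDimensional ℝ V] {n : ℕ}
    (hdim : Module.finrank ℝ V = 2 * n)
    (Ω : V [⋀^Fin 2]→ₗ[ℝ] ℝ) (hΩ : Nondeg Ω)
    {e f e' f' : Fin n → V}
    (hb : IsSymplecticBasis Ω e f) (hb' : IsSymplecticBasis Ω e' f')
    (k : ℕ) (ω : V [⋀^Fin (k + 2)]→ₗ[ℝ] ℝ) :
    ∑ i, ((ω.curryLeft (e i)).curryLeft (f i)) =
      ∑ i, ((ω.curryLeft (e' i)).curryLeft (f' i)) :=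
  lower_independent_of_symplectic_basis_general Ω hb hb' k ω

end SymplSS
end

section
/- Let (V, Ω) be a 2n-dimensional real symplectic vector space. For every k ≥ 0, the space Λ^k of alternating k-forms on V splits into the direct sum Λ^k = Λ_ε^k ⊕ (Ω ∧ Λ^{k−2}), i.e. every alternating k-form is uniquely the sum of an effective k-form and a k-form of the shape Ω∧η with η ∈ Λ^{k−2}. -/
open scoped TensorProduct

namespace SymplSS

variable {V : Type*} [AddCommGroup V] [Module ℝ V]

/-!
For the pairing `⟨α, ω⟩ = ∑ α(b_{a₁}, …, b_{a_d}) ω(b_{a₁}, …, b_{a_d})`, summed over all tuples of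
vectors of the symplectic basis `b = (e, f)`, the operator `⊥` is adjoint to `Ω ∧ ·` up to the
positive factor `k! / (k-2)!`: expanding `Ω ∧ η` by alternatization, each permutation contributes
the same amount because `ω` is alternating, and contracting the two `Ω`-slots against `ω` over the
basis gives `2 ⊥ω`. The pairing is positive definite, so `ker ⊥` is the orthogonal complement of
the image of `Ω ∧ ·`, and a subspace on which the form is definite is complementary to its
orthogonal complement.
-/

open Module
open scoped Nat

theorem isCompl_range_ker_of_adjoint {K M N : Type*} [Field K] [AddCommGroup M] [Module K M]
    [FiniteDimensional K M] [AddCommGroup N] [Module K N]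
    {B : LinearMap.BilinForm K M} {B' : LinearMap.BilinForm K N} (hB : B.IsRefl)
    (hB_aniso : ∀ x, B x x = 0 → x = 0) (hB'_aniso : ∀ y, B' y y = 0 → y = 0)
    {L : N →ₗ[K] M} {T : M →ₗ[K] N} {a c : K} (ha : a ≠ 0) (hc : c ≠ 0)
    (hadj : ∀ y x, a * B (L y) x = c * B' y (T x)) :
    IsCompl (LinearMap.range L) (LinearMap.ker T) := by
  have hker : B.orthogonal (LinearMap.range L) = LinearMap.ker T := by
    ext x
    simp only [LinearMap.BilinForm.mem_orthogonal_iff, LinearMap.mem_range, LinearMap.mem_ker,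
      forall_exists_index, forall_apply_eq_imp_iff]
    refine ⟨fun h => hB'_aniso _ ?_, fun h y => ?_⟩
    · simpa [h, hc] using (hadj (T x) x).symm
    · simpa [h, ha] using hadj y x
  have hnondeg : (B.restrict (LinearMap.range L)).Nondegenerate :=
    ⟨fun x hx => Subtype.ext (hB_aniso _ (hx x)), fun x hx => Subtype.ext (hB_aniso _ (hx x))⟩
  rw [← hker]
  exact LinearMap.BilinForm.isCompl_orthogonal_of_restrict_nondegenerate hB hnondeg

theorem existsUnique_mem_mem_add_of_isCompl {R M : Type*} [Ring R] [AddCommGroup M]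
    [Module R M] {p q : Submodule R M} (h : IsCompl p q) (x : M) :
    ∃! y : M × M, y.1 ∈ p ∧ y.2 ∈ q ∧ x = y.1 + y.2 := by
  obtain ⟨u, v, huv, huniq⟩ := Submodule.existsUnique_add_of_isCompl h x
  refine ⟨(u, v), ⟨u.2, v.2, huv.symm⟩, fun ⟨y₁, y₂⟩ ⟨h₁, h₂, hx⟩ => ?_⟩
  obtain ⟨rfl, rfl⟩ := huniq ⟨y₁, h₁⟩ ⟨y₂, h₂⟩ hx.symm
  rfl

instance moduleFinite_alternatingMap {κ : Type*} [Finite κ] [Module.Finite ℝ V] :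
    Module.Finite ℝ (V [⋀^κ]→ₗ[ℝ] ℝ) :=
  Module.Finite.of_injective (AlternatingMap.toMultilinearMapLM (S := ℝ))
    AlternatingMap.coe_multilinearMap_injective

section BasisPairing

variable {ι κ : Type*} [Fintype ι] [Fintype κ] [DecidableEq κ]

noncomputable def basisPairing (b : ι → V) : LinearMap.BilinForm ℝ (V [⋀^κ]→ₗ[ℝ] ℝ) :=
  LinearMap.mk₂ ℝ (fun α ω => ∑ a : κ → ι, α (b ∘ a) * ω (b ∘ a))
    (fun _ _ _ => by simp only [AlternatingMap.add_apply, add_mul, Finset.sum_add_distrib])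
    (fun _ _ _ => by simp only [AlternatingMap.smul_apply, smul_eq_mul, Finset.mul_sum, mul_assoc])
    (fun _ _ _ => by simp only [AlternatingMap.add_apply, mul_add, Finset.sum_add_distrib])
    (fun _ _ _ => by
      simp only [AlternatingMap.smul_apply, smul_eq_mul, Finset.mul_sum, mul_left_comm])

theorem basisPairing_apply (b : ι → V) (α ω : V [⋀^κ]→ₗ[ℝ] ℝ) :
    basisPairing b α ω = ∑ a : κ → ι, α (b ∘ a) * ω (b ∘ a) :=
  rfl

theorem basisPairing_comm (b : ι → V) (α ω : V [⋀^κ]→ₗ[ℝ] ℝ) :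
    basisPairing b α ω = basisPairing b ω α := by
  simp only [basisPairing_apply, mul_comm]

theorem basisPairing_isRefl (b : ι → V) : (basisPairing (κ := κ) b).IsRefl :=
  fun α ω h => by rwa [basisPairing_comm]

theorem eq_zero_of_basisPairing_self_eq_zero (b : Basis ι ℝ V) {ω : V [⋀^κ]→ₗ[ℝ] ℝ}
    (h : basisPairing b ω ω = 0) : ω = 0 := by
  rw [basisPairing_apply, Finset.sum_eq_zero_iff_of_nonneg fun a _ => mul_self_nonneg _] at h
  exact b.ext_alternating fun a _ => mul_self_eq_zero.mp (h a (Finset.mem_univ a))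

theorem basisPairing_domDomCongr {κ' : Type*} [Fintype κ'] [DecidableEq κ'] (b : ι → V)
    (F : κ ≃ κ') (α : V [⋀^κ]→ₗ[ℝ] ℝ) (ω : V [⋀^κ']→ₗ[ℝ] ℝ) :
    basisPairing b (α.domDomCongr F) ω = basisPairing b α (ω.domDomCongr F.symm) := by
  simp only [basisPairing_apply]
  refine Fintype.sum_equiv (Equiv.arrowCongr F.symm (Equiv.refl ι)) _ _ fun a => ?_
  simp [Function.comp_def]

theorem sum_alternatization_mul (b : ι → V) (G : MultilinearMap ℝ (fun _ : κ => V) ℝ)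
    (ω : V [⋀^κ]→ₗ[ℝ] ℝ) :
    ∑ a : κ → ι, MultilinearMap.alternatization G (b ∘ a) * ω (b ∘ a) =
      (Fintype.card κ)! * ∑ a : κ → ι, G (b ∘ a) * ω (b ∘ a) := by
  have hσ : ∀ σ : Equiv.Perm κ, ∑ a : κ → ι, (Equiv.Perm.sign σ • G.domDomCongr σ (b ∘ a)) *
      ω (b ∘ a) = ∑ a : κ → ι, G (b ∘ a) * ω (b ∘ a) := by
    intro σ
    refine Fintype.sum_equiv (Equiv.arrowCongr σ.symm (Equiv.refl ι)) _ _ fun a => ?_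
    have hω : ω (b ∘ a) = Equiv.Perm.sign σ • ω (b ∘ a ∘ σ) := by
      rw [← Function.comp_assoc, ω.map_perm, smul_smul, Int.units_mul_self, one_smul]
    rw [hω, MultilinearMap.domDomCongr_apply, smul_mul_smul_comm, Int.units_mul_self, one_smul]
    rfl
  simp only [MultilinearMap.alternatization_apply, Finset.sum_mul]
  rw [Finset.sum_comm, Finset.sum_congr rfl fun σ _ => hσ σ, Finset.sum_const, Finset.card_univ,
    Fintype.card_perm, nsmul_eq_mul]

theorem basisPairing_domCoprod {ιa ιb : Type*} [Fintype ιa] [DecidableEq ιa] [Fintype ιb]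
    [DecidableEq ιb] (b : ι → V) (α : V [⋀^ιa]→ₗ[ℝ] ℝ) (β : V [⋀^ιb]→ₗ[ℝ] ℝ)
    (ω : V [⋀^(ιa ⊕ ιb)]→ₗ[ℝ] ℝ) :
    ((Fintype.card ιa)! * (Fintype.card ιb)! : ℝ) *
        basisPairing b ((TensorProduct.lid ℝ ℝ).toLinearMap.compAlternatingMap (α.domCoprod β)) ω =
      (Fintype.card (ιa ⊕ ιb))! * ∑ s : ιa → ι, ∑ r : ιb → ι,
        α (b ∘ s) * β (b ∘ r) * ω (Sum.elim (b ∘ s) (b ∘ r)) := by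
  set G := (TensorProduct.lid ℝ ℝ).toLinearMap.compMultilinearMap
    (MultilinearMap.domCoprod (α : MultilinearMap ℝ (fun _ : ιa => V) ℝ)
      (β : MultilinearMap ℝ (fun _ : ιb => V) ℝ))
  have halt : MultilinearMap.alternatization G = ((Fintype.card ιa)! * (Fintype.card ιb)!) •
      (TensorProduct.lid ℝ ℝ).toLinearMap.compAlternatingMap (α.domCoprod β) := by
    rw [LinearMap.compMultilinearMap_alternatization, MultilinearMap.domCoprod_alternization_eq,
      LinearMap.compAlternatingMap_smul]
  have hsplit : ∑ a : ιa ⊕ ιb → ι, G (b ∘ a) * ω (b ∘ a) =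
      ∑ s : ιa → ι, ∑ r : ιb → ι, α (b ∘ s) * β (b ∘ r) * ω (Sum.elim (b ∘ s) (b ∘ r)) := by
    rw [← Fintype.sum_prod_type']
    refine Fintype.sum_equiv (Equiv.sumArrowEquivProdArrow ιa ιb ι) _ _ fun a => ?_
    have ha : Sum.elim (b ∘ a ∘ Sum.inl) (b ∘ a ∘ Sum.inr) = b ∘ a := by
      ext (i | i) <;> rfl
    change G (b ∘ a) * ω (b ∘ a) = α (b ∘ a ∘ Sum.inl) * β (b ∘ a ∘ Sum.inr) *
      ω (Sum.elim (b ∘ a ∘ Sum.inl) (b ∘ a ∘ Sum.inr))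
    rw [ha]
    rfl
  calc _ = ∑ a : ιa ⊕ ιb → ι, MultilinearMap.alternatization G (b ∘ a) * ω (b ∘ a) := by
        simp only [basisPairing_apply, Finset.mul_sum, halt, AlternatingMap.smul_apply,
          nsmul_eq_mul, mul_assoc, Nat.cast_mul]
    _ = _ := by rw [sum_alternatization_mul, hsplit]

end BasisPairing

theorem lower_apply {n m : ℕ} (e f : Fin n → V) (ω : V [⋀^Fin (m + 2)]→ₗ[ℝ] ℝ) (w : Fin m → V) :
    lower e f ω w = ∑ i, ω (Fin.cons (e i) (Fin.cons (f i) w)) := by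
  change AlternatingMap.toMultilinearMapLM (S := ℝ)
    (∑ i, (ω.curryLeft (e i)).curryLeft (f i)) w = _
  rw [map_sum, sum_apply]
  rfl

theorem wedgeOmega_eq_domDomCongr {m : ℕ} (Ω : V [⋀^Fin 2]→ₗ[ℝ] ℝ) (η : V [⋀^Fin m]→ₗ[ℝ] ℝ) :
    wedgeOmega Ω (m + 2) η =
      ((TensorProduct.lid ℝ ℝ).toLinearMap.compAlternatingMap (Ω.domCoprod η)).domDomCongr
        (finSumFinEquiv.trans (finCongr (Nat.add_comm 2 m))) := by
  rw [wedgeOmega, dif_pos (Nat.le_add_left 2 m)]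
  rfl

theorem domDomCongr_finSumFinEquiv_symm_apply_elim {m : ℕ} (ω : V [⋀^Fin (m + 2)]→ₗ[ℝ] ℝ)
    (x y : V) (w : Fin m → V) :
    ω.domDomCongr (finSumFinEquiv.trans (finCongr (Nat.add_comm 2 m))).symm (Sum.elim ![x, y] w) =
      ω (Fin.cons x (Fin.cons y w)) := by
  rw [AlternatingMap.domDomCongr_apply]
  congr 1
  ext i
  refine Fin.cases ?_ (Fin.cases ?_ fun j => ?_) i
  · rfl
  · rfl
  · have hj : Fin.cast (Nat.add_comm 2 m).symm j.succ.succ = Fin.natAdd 2 j :=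
      Fin.ext (by simp only [Fin.val_cast, Fin.val_succ, Fin.val_natAdd]; omega)
    simp [hj]

noncomputable def wedgeOmegaHom (Ω : V [⋀^Fin 2]→ₗ[ℝ] ℝ) :
    ∀ k : ℕ, (V [⋀^Fin (k - 2)]→ₗ[ℝ] ℝ) →ₗ[ℝ] V [⋀^Fin k]→ₗ[ℝ] ℝ
  | 0 => 0
  | 1 => 0
  | m + 2 => (castHom (Nat.add_comm 2 m)).comp (wedgeHom Ω m)

theorem wedgeOmegaHom_apply (Ω : V [⋀^Fin 2]→ₗ[ℝ] ℝ) :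
    ∀ (k : ℕ) (η : V [⋀^Fin (k - 2)]→ₗ[ℝ] ℝ), wedgeOmegaHom Ω k η = wedgeOmega Ω k η
  | 0, _ | 1, _ => by rw [wedgeOmega, dif_neg (by omega)]; rfl
  | _ + 2, _ => by rw [wedgeOmega, dif_pos (by omega)]; rfl

section Symplectic

variable {n : ℕ} {Ω : V [⋀^Fin 2]→ₗ[ℝ] ℝ} {e f : Fin n → V}

theorem IsSymplecticBasis.fe (hb : IsSymplecticBasis Ω e f) (i j : Fin n) :
    Ω ![f i, e j] = -if j = i then 1 else 0 := by
  rw [← hb.ef, ← Ω.map_swap (v := ![e j, f i]) (i := 0) (j := 1) (by decide)]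
  congr 1
  ext k
  fin_cases k <;> rfl

theorem IsSymplecticBasis.sum_mul_apply (hb : IsSymplecticBasis Ω e f) (ψ : V → V → ℝ)
    (hψ : ∀ x y, ψ y x = -ψ x y) :
    ∑ a : Fin 2 → Fin n ⊕ Fin n,
        Ω (Sum.elim e f ∘ a) * ψ (Sum.elim e f (a 0)) (Sum.elim e f (a 1)) =
      2 * ∑ i, ψ (e i) (f i) := by
  have hcomp : ∀ s t, Sum.elim e f ∘ ![s, t] = ![Sum.elim e f s, Sum.elim e f t] := by
    intro s t
    ext k
    fin_cases k <;> rfl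
  have hψfe : ∀ i j, ψ (f i) (e j) = -ψ (e j) (f i) := fun i j => hψ _ _
  rw [← (finTwoArrowEquiv _).symm.sum_comp, Fintype.sum_prod_type]
  simp only [finTwoArrowEquiv_symm_apply, Matrix.cons_val_zero, Matrix.cons_val_one, hcomp,
    Fintype.sum_sum_type, Sum.elim_inl, Sum.elim_inr, hb.ee, hb.ff, hb.ef, hb.fe, hψfe,
    zero_mul, Finset.sum_const_zero, ite_mul, neg_mul, mul_neg, one_mul, neg_neg,
    Finset.sum_ite_eq, Finset.sum_ite_eq', Finset.mem_univ, if_true, add_zero, zero_add]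
  ring

theorem basisPairing_wedgeOmega {m : ℕ} (hb : IsSymplecticBasis Ω e f)
    (η : V [⋀^Fin m]→ₗ[ℝ] ℝ) (ω : V [⋀^Fin (m + 2)]→ₗ[ℝ] ℝ) :
    (m ! : ℝ) * basisPairing (Sum.elim e f) (wedgeOmega Ω (m + 2) η) ω =
      (m + 2)! * basisPairing (Sum.elim e f) η (lower e f ω) := by
  set b := Sum.elim e f
  set ω' := ω.domDomCongr (finSumFinEquiv.trans (finCongr (Nat.add_comm 2 m))).symm
  have hpair := basisPairing_domCoprod b Ω η ω'
  simp only [Fintype.card_fin, Fintype.card_sum, Nat.factorial_two] at hpair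
  have hcontract : ∑ s : Fin 2 → Fin n ⊕ Fin n, ∑ r : Fin m → Fin n ⊕ Fin n,
      Ω (b ∘ s) * η (b ∘ r) * ω' (Sum.elim (b ∘ s) (b ∘ r)) =
      2 * basisPairing b η (lower e f ω) := by
    rw [Finset.sum_comm, basisPairing_apply, Finset.mul_sum]
    refine Finset.sum_congr rfl fun r _ => ?_
    have hψ : ∀ x y, ω (Fin.cons y (Fin.cons x (b ∘ r))) = -ω (Fin.cons x (Fin.cons y (b ∘ r))) :=
      fun x y => by
        rw [← ω.map_swap (Fin.cons x (Fin.cons y (b ∘ r))) Fin.zero_ne_one]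
        exact congrArg ω (Matrix.cons_cons_comp_swap_zero_one x y _).symm
    rw [lower_apply, mul_left_comm, ← hb.sum_mul_apply _ hψ, Finset.mul_sum]
    refine Finset.sum_congr rfl fun s _ => ?_
    have hs : b ∘ s = ![b (s 0), b (s 1)] := by
      ext k
      fin_cases k <;> rfl
    rw [hs, domDomCongr_finSumFinEquiv_symm_apply_elim]
    ring
  rw [hcontract, Nat.add_comm 2 m] at hpair
  rw [wedgeOmega_eq_domDomCongr, basisPairing_domDomCongr]
  push_cast at hpair
  linear_combination hpair / 2

theorem basisPairing_wedgeOmegaHom (hb : IsSymplecticBasis Ω e f) :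
    ∀ (k : ℕ) (η : V [⋀^Fin (k - 2)]→ₗ[ℝ] ℝ) (ω : V [⋀^Fin k]→ₗ[ℝ] ℝ),
      ((k - 2)! : ℝ) * basisPairing (Sum.elim e f) (wedgeOmegaHom Ω k η) ω =
        k ! * basisPairing (Sum.elim e f) η (lowerHom e f k ω)
  | 0, _, _ | 1, _, _ => by simp [wedgeOmegaHom, lowerHom, lower]
  | _ + 2, η, ω => by rw [wedgeOmegaHom_apply]; exact basisPairing_wedgeOmega hb η ω

theorem isCompl_effSubmodule_range_wedgeOmegaHom (hb : IsSymplecticBasis Ω e f) (k : ℕ) :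
    IsCompl (effSubmodule e f k) (LinearMap.range (wedgeOmegaHom Ω k)) := by
  let b := Basis.mk hb.indep hb.span.ge
  have hb_coe : ⇑b = Sum.elim e f := Basis.coe_mk _ _
  have : Module.Finite ℝ V := Module.Finite.of_basis b
  refine (isCompl_range_ker_of_adjoint (basisPairing_isRefl _) ?_ ?_ (by positivity)
    (by positivity) (basisPairing_wedgeOmegaHom hb k)).symm
  all_goals exact fun _ h => eq_zero_of_basisPairing_self_eq_zero b (hb_coe ▸ h)

end Symplectic

theorem splitting_effective_top_general
    {V : Type*} [AddCommGroup V] [Module ℝ V] {n : ℕ}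
    (Ω : V [⋀^Fin 2]→ₗ[ℝ] ℝ)
    {e f : Fin n → V} (hb : IsSymplecticBasis Ω e f)
    (k : ℕ) (ω : V [⋀^Fin k]→ₗ[ℝ] ℝ) :
    ∃! p : (V [⋀^Fin k]→ₗ[ℝ] ℝ) × (V [⋀^Fin k]→ₗ[ℝ] ℝ),
      IsEff e f p.1 ∧
      (∃ η : V [⋀^Fin (k - 2)]→ₗ[ℝ] ℝ, p.2 = wedgeOmega Ω k η) ∧
      ω = p.1 + p.2 := by
  refine (existsUnique_congr fun p => ?_).mp
    (existsUnique_mem_mem_add_of_isCompl (isCompl_effSubmodule_range_wedgeOmegaHom hb k) ω)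
  simp only [LinearMap.mem_range, wedgeOmegaHom_apply, eq_comm (b := p.2)]
  rfl

/-- `Λ^k` splits as the direct sum `Λ_ε^k ⊕ (Ω ∧ Λ^(k-2))`: every alternating
`k`-form is uniquely the sum of an effective `k`-form and a form of the shape `Ω ∧ η`. -/
theorem splitting_effective_top
    {V : Type*} [AddCommGroup V] [Module ℝ V] [FiniteDimensional ℝ V] {n : ℕ}
    (hdim : Module.finrank ℝ V = 2 * n)
    (Ω : V [⋀^Fin 2]→ₗ[ℝ] ℝ) (hΩ : Nondeg Ω)
    {e f : Fin n → V} (hb : IsSymplecticBasis Ω e f)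
    (k : ℕ) (ω : V [⋀^Fin k]→ₗ[ℝ] ℝ) :
    ∃! p : (V [⋀^Fin k]→ₗ[ℝ] ℝ) × (V [⋀^Fin k]→ₗ[ℝ] ℝ),
      IsEff e f p.1 ∧
      (∃ η : V [⋀^Fin (k - 2)]→ₗ[ℝ] ℝ, p.2 = wedgeOmega Ω k η) ∧
      ω = p.1 + p.2 :=
  splitting_effective_top_general Ω hb k ω

end SymplSS
end

section
/- Let (V, Ω) be a 2n-dimensional real symplectic vector space. If k > n, then the only effective alternating k-form on V is zero, i.e. Λ_ε^k = 0 for k > n. -/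
open scoped TensorProduct

namespace SymplSS

variable {V : Type*} [AddCommGroup V] [Module ℝ V]

/-!
Evaluate `ω` on basis vectors: up to sign, the tuple consists of full pairs `(e i, f i)`, `i ∈ P`,
and a tail `s` of `t` vectors with pairwise distinct indices, so `k = t + 2 * #P`. For fixed `s`,
the value `c P = ω (e p₁, f p₁, …, e pₘ, f pₘ, s)` depends only on the set `P`, and it vanishes
unless `P` lies in the set `I` of the `n - t` indices not used by `s`. Effectiveness says
`∑ j ∈ I \ Q, c (insert j Q) = 0` for every `Q` of size `#P - 1`. On functions on subsets of `I`,
this "insert" operator `U` and the "erase" operator `D` (the shadows of `⊥` and `Ω ∧ ·`) satisfy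
the `sl₂` relation `U D - D U = #I - 2 #S`. As `#I < 2 * #P` because `k > n`, a downward
induction on `#S` shows that `D^d c` vanishes on sets of size `#P + d` for every `d`, and `d = 0`
gives `c = 0`.
-/

section Combinatorics

variable {α : Type*} [DecidableEq α] (I : Finset α)

def insertSum (c : Finset α → ℝ) (Q : Finset α) : ℝ := ∑ j ∈ I \ Q, c (insert j Q)

def eraseSum (c : Finset α → ℝ) (S : Finset α) : ℝ := ∑ i ∈ S, c (S.erase i)

variable {I}

theorem insertSum_eraseSum (c : Finset α → ℝ) {S : Finset α} (hS : S ⊆ I) :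
    insertSum I (eraseSum c) S
      = eraseSum (insertSum I c) S + ((I.card : ℝ) - 2 * S.card) * c S := by
  have hins : insertSum I (eraseSum c) S
      = ∑ j ∈ I \ S, (c S + ∑ i ∈ S, c (insert j (S.erase i))) := by
    refine Finset.sum_congr rfl fun j hj => ?_
    have hjS : j ∉ S := (Finset.mem_sdiff.mp hj).2
    rw [eraseSum, Finset.sum_insert hjS, Finset.erase_insert hjS]
    congr 1
    refine Finset.sum_congr rfl fun i hi => ?_
    rw [Finset.erase_insert_of_ne (by rintro rfl; exact hjS hi)]
  have hera : eraseSum (insertSum I c) S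
      = ∑ i ∈ S, (c S + ∑ j ∈ I \ S, c (insert j (S.erase i))) := by
    refine Finset.sum_congr rfl fun i hi => ?_
    have hcompl : I \ S.erase i = insert i (I \ S) := by
      ext x; by_cases hx : x = i <;> simp [hx, hi, hS hi]
    rw [insertSum, hcompl, Finset.sum_insert (by simp [hi]), Finset.insert_erase hi]
  rw [hins, hera, Finset.sum_add_distrib, Finset.sum_add_distrib, Finset.sum_comm,
    Finset.sum_const, Finset.sum_const, Finset.card_sdiff_of_subset hS,
    nsmul_eq_mul, nsmul_eq_mul, Nat.cast_sub (Finset.card_le_card hS)]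
  ring

variable {m : ℕ} {c : Finset α → ℝ}

theorem insertSum_eraseSum_iterate (hc : ∀ Q ⊆ I, Q.card + 1 = m → insertSum I c Q = 0)
    (j : ℕ) {S : Finset α} (hS : S ⊆ I) (hcard : S.card = m + j) :
    insertSum I (eraseSum^[j + 1] c) S
      = ((j + 1) * ((I.card : ℝ) - 2 * m - j)) * eraseSum^[j] c S := by
  induction j generalizing S with
  | zero =>
    have hvanish : eraseSum (insertSum I c) S = 0 :=
      Finset.sum_eq_zero fun i hi => hc _ ((S.erase_subset i).trans hS)
        (by rw [Finset.card_erase_of_mem hi]; have := Finset.card_pos.mpr ⟨i, hi⟩; omega)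
    rw [Function.iterate_one, insertSum_eraseSum c hS, hvanish, hcard]
    simp only [Function.iterate_zero, id_eq, CharP.cast_eq_zero]
    push_cast
    ring
  | succ j ih =>
    have hera : eraseSum (insertSum I (eraseSum^[j + 1] c)) S
        = ((j + 1) * ((I.card : ℝ) - 2 * m - j)) * eraseSum^[j + 1] c S := by
      conv_rhs => rw [Function.iterate_succ_apply']
      rw [eraseSum, eraseSum, Finset.mul_sum]
      exact Finset.sum_congr rfl fun i hi =>
        ih ((S.erase_subset i).trans hS) (by rw [Finset.card_erase_of_mem hi]; omega)
    rw [Function.iterate_succ_apply' _ (j + 1), insertSum_eraseSum _ hS, hera, hcard]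
    push_cast
    ring

theorem eq_zero_of_insertSum_eq_zero (hm : I.card < 2 * m)
    (hc : ∀ Q ⊆ I, Q.card + 1 = m → insertSum I c Q = 0) {S : Finset α} (hS : S ⊆ I)
    (hcard : S.card = m) : c S = 0 := by
  suffices h : ∀ d, S ⊆ I → S.card = m + d → eraseSum^[d] c S = 0 from h 0 hS hcard
  refine Finset.strongDownwardInduction (n := I.card)
    (p := fun S => ∀ d, S ⊆ I → S.card = m + d → eraseSum^[d] c S = 0) ?_ S
    (Finset.card_le_card hS)
  intro S ih _ d hS hcard
  have hsum : insertSum I (eraseSum^[d + 1] c) S = 0 := by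
    refine Finset.sum_eq_zero fun j hj => ?_
    obtain ⟨hjI, hjS⟩ := Finset.mem_sdiff.mp hj
    have hsub : insert j S ⊆ I := Finset.insert_subset hjI hS
    exact ih (Finset.card_le_card hsub) (Finset.ssubset_insert hjS) (d + 1) hsub
      (by rw [Finset.card_insert_of_notMem hjS, hcard]; ring)
  have hcoef : ((d + 1) * ((I.card : ℝ) - 2 * m - d)) ≠ 0 := by
    have : (I.card : ℝ) < 2 * m := by exact_mod_cast hm
    apply mul_ne_zero <;> nlinarith [(d.cast_nonneg : (0 : ℝ) ≤ d)]
  rw [insertSum_eraseSum_iterate hc d hS hcard] at hsum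
  exact (mul_eq_zero.mp hsum).resolve_left hcoef

end Combinatorics

section PairTuple

variable {ι X : Type*}

def pairTuple (g₁ g₂ : ι → X) {t : ℕ} (s : Fin t → X) :
    (l : List (ι)) → Fin (t + 2 * l.length) → X
  | [] => s
  | j :: l => Fin.cons (g₁ j) (Fin.cons (g₂ j) (pairTuple g₁ g₂ s l))

variable (g₁ g₂ : ι → X) {t : ℕ} (s : Fin t → X)

theorem comp_pairTuple {Y : Type*} (B : X → Y) :
    ∀ l : List (ι), B ∘ pairTuple g₁ g₂ s l = pairTuple (B ∘ g₁) (B ∘ g₂) (B ∘ s) l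
  | [] => rfl
  | j :: l => by simp only [pairTuple, Fin.comp_cons, comp_pairTuple B l, Function.comp_apply]

theorem range_pairTuple : ∀ l : List (ι),
    Set.range (pairTuple g₁ g₂ s l) = g₁ '' {j | j ∈ l} ∪ g₂ '' {j | j ∈ l} ∪ Set.range s
  | [] => by simp [pairTuple]
  | j :: l => by
    ext x
    simp only [pairTuple, Fin.range_cons, range_pairTuple l]
    simp only [Set.mem_insert_iff, Set.mem_union, Set.mem_image, Set.mem_ofPred_eq,
      List.mem_cons]
    grind

theorem not_injective_pairTuple_cons {j : ι} {l : List (ι)}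
    (h : g₁ j ∈ Set.range (pairTuple g₁ g₂ s l) ∨ g₂ j ∈ Set.range (pairTuple g₁ g₂ s l)) :
    ¬ Function.Injective (pairTuple g₁ g₂ s (j :: l)) := by
  intro hinj
  obtain ⟨h₁, hinj⟩ := Fin.cons_injective_iff.mp hinj
  obtain ⟨h₂, -⟩ := Fin.cons_injective_iff.mp hinj
  rw [Fin.range_cons] at h₁
  exact h.elim (fun h => h₁ (Or.inr h)) h₂

theorem range_pairTuple_inl_inr [DecidableEq ι] {L R : Finset ι} {a : Fin t → ι ⊕ ι}
    (ha : Set.range a = ↑((L \ R).disjSum (R \ L))) :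
    Set.range (pairTuple Sum.inl Sum.inr a (L ∩ R).toList) = ↑(L.disjSum R) := by
  rw [range_pairTuple, ha]
  ext (j | j) <;> simp <;> tauto

end PairTuple

section CardSymmDiff

variable {α : Type*} [DecidableEq α] (L R : Finset α)

theorem card_disjSum_eq_card_disjSum_sdiff_add :
    (L.disjSum R).card = ((L \ R).disjSum (R \ L)).card + 2 * (L ∩ R).card := by
  have hL := Finset.card_inter_add_card_sdiff L R
  have hR := Finset.card_inter_add_card_sdiff R L
  rw [Finset.inter_comm R L] at hR
  simp only [Finset.card_disjSum]
  omega

theorem card_compl_sdiff_union_sdiff_lt [Fintype α] (h : Fintype.card α < L.card + R.card) :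
    (L \ R ∪ R \ L)ᶜ.card < 2 * (L ∩ R).card := by
  have hL := Finset.card_inter_add_card_sdiff L R
  have hR := Finset.card_inter_add_card_sdiff R L
  rw [Finset.inter_comm R L] at hR
  have hle := Finset.card_le_univ (L \ R ∪ R \ L)
  rw [Finset.card_union_of_disjoint disjoint_sdiff_sdiff] at hle
  rw [Finset.card_compl, Finset.card_union_of_disjoint disjoint_sdiff_sdiff]
  omega

end CardSymmDiff

theorem cons_cons_cons_cons_eq_comp_swap {X : Type*} {m : ℕ} (a b c d : X) (u : Fin m → X) :
    (Fin.cons c (Fin.cons d (Fin.cons a (Fin.cons b u))) : Fin (m + 4) → X)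
      = Fin.cons a (Fin.cons b (Fin.cons c (Fin.cons d u))) ∘
          (Equiv.swap 0 2 * Equiv.swap 1 3 : Equiv.Perm (Fin (m + 4))) := by
  ext x
  refine Fin.cases rfl (Fin.cases rfl (Fin.cases rfl (Fin.cases rfl fun x => ?_))) x
  rw [Function.comp_apply, Equiv.Perm.mul_apply, Equiv.swap_apply_of_ne_of_ne (a := 1) (b := 3),
    Equiv.swap_apply_of_ne_of_ne]
  · rfl
  all_goals simp [Fin.ext_iff, Nat.mod_eq_of_lt]

theorem _root_.AlternatingMap.map_comp_eq_zero_of_range_subset {R M N ι β : Type*} [CommRing R]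
    [AddCommGroup M] [Module R M] [AddCommGroup N] [Module R N] [Fintype ι] [DecidableEq ι]
    (ω : M [⋀^ι]→ₗ[R] N) (B : β → M) {v w : ι → β} (hv : Function.Injective v)
    (hvw : Set.range v ⊆ Set.range w) (hw : ω (B ∘ w) = 0) : ω (B ∘ v) = 0 := by
  choose τ hτ using fun i => hvw (Set.mem_range_self i)
  have hτinj : Function.Injective τ := fun i j hij => hv (by rw [← hτ i, ← hτ j, hij])
  have hvτ : B ∘ v = (B ∘ w) ∘ Equiv.ofBijective τ hτinj.bijective_of_finite := by
    ext i; simp [hτ]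
  rw [hvτ, ω.map_perm, hw, smul_zero]

noncomputable def contractPair (a b : V) :
    ∀ k : ℕ, (V [⋀^Fin k]→ₗ[ℝ] ℝ) →ₗ[ℝ] V [⋀^Fin (k - 2)]→ₗ[ℝ] ℝ
  | 0 => 0
  | 1 => 0
  | _ + 2 => (LinearMap.applyₗ b ∘ₗ AlternatingMap.curryLeftLinearMap) ∘ₗ
      (LinearMap.applyₗ a ∘ₗ AlternatingMap.curryLeftLinearMap)

theorem contractPair_comp_comm (a b c d : V) :
    ∀ k : ℕ, contractPair a b (k - 2) ∘ₗ contractPair c d k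
      = contractPair c d (k - 2) ∘ₗ contractPair a b k
  | 0 | 1 | 2 | 3 => by ext; rfl
  | m + 4 => by
    ext ω u
    change ω (Fin.cons c (Fin.cons d (Fin.cons a (Fin.cons b u))))
      = ω (Fin.cons a (Fin.cons b (Fin.cons c (Fin.cons d u))))
    rw [cons_cons_cons_cons_eq_comp_swap, ω.map_perm, Equiv.Perm.sign_mul,
      Equiv.Perm.sign_swap, Equiv.Perm.sign_swap]
    · simp
    all_goals simp [Fin.ext_iff, Nat.mod_eq_of_lt]

theorem lowerHom_eq_sum_contractPair {n : ℕ} (e f : Fin n → V) :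
    ∀ k : ℕ, lowerHom e f k = ∑ i, contractPair (e i) (f i) k
  | 0 | 1 => by ext; simp [lowerHom, lower, contractPair]
  | k + 2 => by ext ω : 1; simp [lowerHom, lower, contractPair]

section EvalPairs

variable {n : ℕ} (e f : Fin n → V) {t : ℕ} (s : Fin t → V)

/-- `ω (e j₁, f j₁, …, e jₘ, f jₘ, s)`, computed by contracting one pair at a time; it is `0`
when the degree of `ω` is not `t + 2m`. -/
noncomputable def evalPairs : List (Fin n) → ∀ k : ℕ, (V [⋀^Fin k]→ₗ[ℝ] ℝ) →ₗ[ℝ] ℝ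
  | [], k =>
    if h : k = t then
      { toFun := fun ω => ω (s ∘ finCongr h)
        map_add' := fun _ _ => rfl
        map_smul' := fun _ _ => rfl }
    else 0
  | j :: l, k => evalPairs l (k - 2) ∘ₗ contractPair (e j) (f j) k

theorem evalPairs_apply : ∀ (l : List (Fin n)) (k : ℕ) (hk : k = t + 2 * l.length)
    (ω : V [⋀^Fin k]→ₗ[ℝ] ℝ), evalPairs e f s l k ω = ω (pairTuple e f s l ∘ finCongr hk)
  | [], k, hk, ω => by rw [evalPairs, dif_pos (show k = t from hk)]; rfl
  | j :: l, _, rfl, ω => by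
    change evalPairs e f s l (t + 2 * l.length) (contractPair (e j) (f j) _ ω) = _
    rw [evalPairs_apply l _ rfl]
    refine congrArg ω (funext fun x => ?_)
    exact Fin.cases rfl (Fin.cases rfl fun _ => rfl) x

theorem evalPairs_perm {l₁ l₂ : List (Fin n)} (hp : l₁.Perm l₂) (k : ℕ) :
    evalPairs e f s l₁ k = evalPairs e f s l₂ k := by
  induction hp generalizing k with
  | nil => rfl
  | cons j _ ih => simp only [evalPairs, ih]
  | swap i j l =>
    simp only [evalPairs, LinearMap.comp_assoc, contractPair_comp_comm]
  | trans _ _ ih₁ ih₂ => rw [ih₁, ih₂]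

theorem sum_evalPairs_cons (l : List (Fin n)) (k : ℕ) :
    ∑ i, evalPairs e f s (i :: l) k = evalPairs e f s l (k - 2) ∘ₗ lowerHom e f k := by
  rw [lowerHom_eq_sum_contractPair]
  ext ω
  simp [evalPairs]

theorem evalPairs_cons_eq_zero {j : Fin n} {l : List (Fin n)} {k : ℕ}
    (hk : k = t + 2 * (l.length + 1))
    (h : e j ∈ Set.range (pairTuple e f s l) ∨ f j ∈ Set.range (pairTuple e f s l))
    (ω : V [⋀^Fin k]→ₗ[ℝ] ℝ) : evalPairs e f s (j :: l) k ω = 0 := by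
  rw [evalPairs_apply e f s (j :: l) k hk]
  refine ω.map_eq_zero_of_not_injective _ fun hinj => not_injective_pairTuple_cons e f s h ?_
  simpa using hinj.comp (finCongr hk).symm.injective

end EvalPairs

section Vanishing

variable {n : ℕ} {e f : Fin n → V} {k : ℕ} {ω : V [⋀^Fin k]→ₗ[ℝ] ℝ}

theorem evalPairs_eq_zero_of_lower_eq_zero (hω : lower e f ω = 0) {t : ℕ} {s : Fin t → V}
    {I : Finset (Fin n)} (hI : ∀ i ∉ I, e i ∈ Set.range s ∨ f i ∈ Set.range s)
    {P : Finset (Fin n)} (hP : P ⊆ I) (hPI : I.card < 2 * P.card) (hk : k = t + 2 * P.card) :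
    evalPairs e f s P.toList k ω = 0 := by
  refine eq_zero_of_insertSum_eq_zero (c := fun P => evalPairs e f s P.toList k ω) hPI
    (fun Q _ hQP => ?_) hP rfl
  have hdeg : k = t + 2 * (Q.toList.length + 1) := by rw [Finset.length_toList]; omega
  have hvanish : ∀ j ∉ I \ Q, evalPairs e f s (j :: Q.toList) k ω = 0 := by
    intro j hj
    refine evalPairs_cons_eq_zero e f s hdeg ?_ ω
    simp only [range_pairTuple, Set.mem_union, Set.mem_image, Set.mem_ofPred_eq,
      Finset.mem_toList]
    by_cases hjQ : j ∈ Q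
    · exact Or.inl (Or.inl (Or.inl ⟨j, hjQ, rfl⟩))
    · rcases hI j fun hjI => hj (Finset.mem_sdiff.mpr ⟨hjI, hjQ⟩) with h | h
      · exact Or.inl (Or.inr h)
      · exact Or.inr (Or.inr h)
  calc insertSum I (fun P => evalPairs e f s P.toList k ω) Q
      = ∑ j ∈ I \ Q, evalPairs e f s (j :: Q.toList) k ω :=
        Finset.sum_congr rfl fun j hj =>
          LinearMap.congr_fun
            (evalPairs_perm e f s (Finset.toList_insert (Finset.mem_sdiff.mp hj).2) k) ω
    _ = ∑ j, evalPairs e f s (j :: Q.toList) k ω :=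
        Finset.sum_subset (Finset.subset_univ _) fun j _ hj => hvanish j hj
    _ = evalPairs e f s Q.toList (k - 2) (lower e f ω) := by
        rw [← LinearMap.sum_apply, sum_evalPairs_cons]; rfl
    _ = 0 := by rw [hω, map_zero]

theorem IsEff.map_sumElim_comp_eq_zero (hω : IsEff e f ω) (hk : n < k)
    {v : Fin k → Fin n ⊕ Fin n} (hv : Function.Injective v) : ω (Sum.elim e f ∘ v) = 0 := by
  classical
  set L := (Finset.univ.image v).toLeft
  set R := (Finset.univ.image v).toRight
  have hLR : L.disjSum R = Finset.univ.image v := Finset.toLeft_disjSum_toRight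
  have hcard : (L.disjSum R).card = k := by
    rw [hLR, Finset.card_image_of_injective _ hv, Finset.card_univ, Fintype.card_fin]
  set A := (L \ R).disjSum (R \ L)
  have hdeg : k = A.card + 2 * (L ∩ R).card := by
    rw [← hcard, card_disjSum_eq_card_disjSum_sdiff_add]
  have hdeg' : k = A.card + 2 * (L ∩ R).toList.length := by rwa [Finset.length_toList]
  set a : Fin A.card → Fin n ⊕ Fin n := (↑) ∘ A.equivFin.symm
  have ha : Set.range a = A := by ext x; simp [a]
  refine ω.map_comp_eq_zero_of_range_subset _ hv
    (w := pairTuple Sum.inl Sum.inr a (L ∩ R).toList ∘ finCongr hdeg') ?_ ?_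
  · rw [EquivLike.range_comp, range_pairTuple_inl_inr ha, hLR, Finset.coe_image,
      Finset.coe_univ, Set.image_univ]
  rw [← Function.comp_assoc, comp_pairTuple, Sum.elim_comp_inl, Sum.elim_comp_inr,
    ← evalPairs_apply]
  refine evalPairs_eq_zero_of_lower_eq_zero hω (I := (L \ R ∪ R \ L)ᶜ) ?_ ?_
    (card_compl_sdiff_union_sdiff_lt L R ?_) hdeg
  · intro i hi
    rw [Finset.mem_compl, not_not, Finset.mem_union] at hi
    rw [Set.range_comp, ha]
    refine hi.imp (fun h => ⟨Sum.inl i, ?_, rfl⟩) (fun h => ⟨Sum.inr i, ?_, rfl⟩) <;>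
      simp [A, h]
  · intro i hi
    simp [Finset.mem_inter.mp hi]
  · rw [Fintype.card_fin, ← Finset.card_disjSum, hcard]
    exact hk

end Vanishing

theorem effective_eq_zero_of_gt_general
    {V : Type*} [AddCommGroup V] [Module ℝ V] {n : ℕ}
    (Ω : V [⋀^Fin 2]→ₗ[ℝ] ℝ)
    {e f : Fin n → V} (hb : IsSymplecticBasis Ω e f)
    (k : ℕ) (hk : n < k) (ω : V [⋀^Fin k]→ₗ[ℝ] ℝ) (hω : IsEff e f ω) :
    ω = 0 := by
  let b : Module.Basis (Fin n ⊕ Fin n) ℝ V := .mk hb.indep hb.span.ge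
  refine b.ext_alternating fun v hv => ?_
  simpa [b, Function.comp_def] using hω.map_sumElim_comp_eq_zero hk hv

/-- On a `2n`-dimensional symplectic vector space there are no nonzero
effective `k`-forms for `k > n`. -/
theorem effective_eq_zero_of_gt
    {V : Type*} [AddCommGroup V] [Module ℝ V] [FiniteDimensional ℝ V] {n : ℕ}
    (hdim : Module.finrank ℝ V = 2 * n)
    (Ω : V [⋀^Fin 2]→ₗ[ℝ] ℝ) (hΩ : Nondeg Ω)
    {e f : Fin n → V} (hb : IsSymplecticBasis Ω e f)
    (k : ℕ) (hk : n < k) (ω : V [⋀^Fin k]→ₗ[ℝ] ℝ) (hω : IsEff e f ω) :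
    ω = 0 :=
  effective_eq_zero_of_gt_general Ω hb k hk ω hω

end SymplSS
end

section
/- (Symplectic star operator.) Let (V, Ω) be a 2n-dimensional real symplectic vector space. For each 0 ≤ k ≤ 2n there exists a unique linear map * : Λ^k → Λ^{2n−k} such that for all alternating k-forms η and ω on V one has η ∧ (*ω) = (⊥^k(η ∧ ω)) · Ω^{∧n}, where ⊥^k(η ∧ ω) is the real number obtained by applying ⊥ k times to the 2k-form η ∧ ω. -/
/-!
Wedging into top degree is a perfect pairing `Λ^k × Λ^(N - k) → Λ^N ≅ ℝ`. Given a basis `b`, the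
wedge of the coordinate covectors of `b` indexed by the complement of an injective tuple `a` pairs
with an `(N - k)`-form `θ` to `±θ (b ∘ a)`, so the pairing is injective; both sides have dimension
`N.choose k`, so it is bijective. The right-hand side `⊥^k (η ∧ ω) • Ω^{∧n}` is bilinear in
`(ω, η)`, hence `⋆ω` is forced to be the preimage of the functional `η ↦ ⊥^k (η ∧ ω) Ω^{∧n}(b)`,
and this preimage depends linearly on `ω`.
-/

open scoped TensorProduct

namespace SymplSS

variable {V : Type*} [AddCommGroup V] [Module ℝ V]

open Function

noncomputable def wedgeBilin {k l : ℕ} :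
    (V [⋀^Fin k]→ₗ[ℝ] ℝ) →ₗ[ℝ] (V [⋀^Fin l]→ₗ[ℝ] ℝ) →ₗ[ℝ] (V [⋀^Fin (k + l)]→ₗ[ℝ] ℝ) :=
  (TensorProduct.mk ℝ _ _).compr₂
    ((AlternatingMap.domDomCongrₗ ℝ finSumFinEquiv).toLinearMap ∘ₗ
      (TensorProduct.lid ℝ ℝ).toLinearMap.compAlternatingMapₗ ℝ ∘ₗ AlternatingMap.domCoprod')

theorem wedgeBilin_apply {k l : ℕ} (η : V [⋀^Fin k]→ₗ[ℝ] ℝ) (θ : V [⋀^Fin l]→ₗ[ℝ] ℝ) :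
    wedgeBilin η θ = wedge η θ :=
  rfl

noncomputable def evalAt {ι : Type*} (v : ι → V) : (V [⋀^ι]→ₗ[ℝ] ℝ) →ₗ[ℝ] ℝ where
  toFun φ := φ v
  map_add' _ _ := rfl
  map_smul' _ _ := rfl

theorem evalAt_apply {ι : Type*} (v : ι → V) (φ : V [⋀^ι]→ₗ[ℝ] ℝ) : evalAt v φ = φ v :=
  rfl

theorem castHom_apply {a b : ℕ} (h : a = b) (ω : V [⋀^Fin a]→ₗ[ℝ] ℝ) :
    castHom h ω = castForm h ω :=
  rfl

noncomputable def lowerIterHom {n : ℕ} (e f : Fin n → V) :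
    ∀ (j k : ℕ), (V [⋀^Fin k]→ₗ[ℝ] ℝ) →ₗ[ℝ] (V [⋀^Fin (k - 2 * j)]→ₗ[ℝ] ℝ)
  | 0, _ => LinearMap.id
  | (j + 1), k => lowerHom e f (k - 2 * j) ∘ₗ lowerIterHom e f j k

theorem lowerIterHom_apply {n : ℕ} (e f : Fin n → V) (j k : ℕ) (ω : V [⋀^Fin k]→ₗ[ℝ] ℝ) :
    lowerIterHom e f j k ω = lowerIter e f j ω := by
  induction j with
  | zero => rfl
  | succ j ih => exact congrArg (lower e f) ih

instance {k : ℕ} [FiniteDimensional ℝ V] : FiniteDimensional ℝ (V [⋀^Fin k]→ₗ[ℝ] ℝ) :=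
  Module.Finite.equiv (exteriorPower.alternatingMapLinearEquiv).symm

theorem finrank_alternatingMap [FiniteDimensional ℝ V] (k : ℕ) :
    Module.finrank ℝ (V [⋀^Fin k]→ₗ[ℝ] ℝ) = (Module.finrank ℝ V).choose k := by
  rw [exteriorPower.alternatingMapLinearEquiv.finrank_eq, Subspace.dual_finrank_eq,
    exteriorPower.finrank_eq]

theorem alternatingMap_eq_of_apply_basis_eq {ι : Type*} [Fintype ι] [DecidableEq ι]
    (b : Module.Basis ι ℝ V) {φ ψ : V [⋀^ι]→ₗ[ℝ] ℝ} (h : φ b = ψ b) : φ = ψ := by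
  rw [φ.eq_smul_basis_det b, ψ.eq_smul_basis_det b, h]

section WedgeCoord

variable {ι κ : Type*} [Fintype κ] [DecidableEq κ]

noncomputable def wedgeCoord (b : Module.Basis ι ℝ V) (c : κ → ι) : V [⋀^κ]→ₗ[ℝ] ℝ :=
  Matrix.detRowAlternating.compLinearMap (LinearMap.pi fun i => b.coord (c i))

theorem wedgeCoord_apply (b : Module.Basis ι ℝ V) (c : κ → ι) (v : κ → V) :
    wedgeCoord b c v = (Matrix.of fun p i => b.coord (c i) (v p)).det :=
  rfl

theorem wedgeCoord_apply_basis_self (b : Module.Basis ι ℝ V) {c : κ → ι} (hc : Injective c) :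
    wedgeCoord b c (b ∘ c) = 1 := by
  classical
  rw [wedgeCoord_apply, ← Matrix.det_one (n := κ)]
  congr 1
  ext p i
  simp [Matrix.one_apply, Finsupp.single_apply, hc.eq_iff]

theorem wedgeCoord_apply_basis_eq_zero (b : Module.Basis ι ℝ V) (c j : κ → ι) {p : κ}
    (hp : j p ∉ Set.range c) : wedgeCoord b c (b ∘ j) = 0 := by
  classical
  refine Matrix.det_eq_zero_of_row_eq_zero p fun i => ?_
  simp only [comp_apply, LinearMap.pi_apply, Module.Basis.coord_apply, Module.Basis.repr_self,
    Finsupp.single_apply, ite_eq_right_iff, one_ne_zero, imp_false]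
  exact fun h => hp ⟨i, h.symm⟩

end WedgeCoord

theorem domCoprod_wedgeCoord_apply {ιa ιb ι : Type*} [Fintype ιa] [Fintype ιb] [DecidableEq ιa]
    [DecidableEq ιb] (b : Module.Basis ι ℝ V) {u : ιa ⊕ ιb → ι} (hu : Injective u)
    (θ : V [⋀^ιb]→ₗ[ℝ] ℝ) :
    (wedgeCoord b (u ∘ Sum.inl)).domCoprod θ (b ∘ u) = (1 : ℝ) ⊗ₜ θ (b ∘ u ∘ Sum.inr) := by
  rw [AlternatingMap.domCoprod_apply, sum_apply]
  refine (Fintype.sum_eq_single (Quotient.mk'' 1) fun σq hσq => ?_).trans ?_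
  swap
  · rw [AlternatingMap.domCoprod.summand_mk'', Equiv.Perm.sign_one, one_smul]
    change wedgeCoord b (u ∘ Sum.inl) (b ∘ u ∘ Sum.inl) ⊗ₜ θ (b ∘ u ∘ Sum.inr) = _
    rw [wedgeCoord_apply_basis_self b (hu.comp Sum.inl_injective)]
  · induction σq using Quotient.inductionOn' with | h σ => ?_
    rw [AlternatingMap.domCoprod.summand_mk'']
    simp only [smul_apply, MultilinearMap.domDomCongr_apply,
      MultilinearMap.domCoprod_apply, AlternatingMap.coe_multilinearMap]
    -- A shuffle outside the identity class sends some slot of the first factor to a basis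
    -- vector outside `range (u ∘ Sum.inl)`, on which `wedgeCoord b (u ∘ Sum.inl)` vanishes.
    obtain ⟨i, j, hij⟩ : ∃ i j, σ (Sum.inl i) = Sum.inr j := by
      by_contra! h
      refine hσq (Quotient.sound' (QuotientGroup.leftRel_apply.mpr ?_))
      refine mul_one σ⁻¹ ▸ Subgroup.inv_mem _ (Equiv.Perm.mem_sumCongrHom_range_of_perm_mapsTo_inl ?_)
      rintro _ ⟨i, rfl⟩
      cases hσ : σ (Sum.inl i) with
      | inl i' => exact ⟨i', rfl⟩
      | inr j => exact absurd hσ (h i j)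
    have hzero : wedgeCoord b (u ∘ Sum.inl) (b ∘ u ∘ σ ∘ Sum.inl) = 0 := by
      refine wedgeCoord_apply_basis_eq_zero b _ _ (p := i) ?_
      rintro ⟨i', hi'⟩
      simp [hij, hu.eq_iff] at hi'
    rw [show (fun i => (b ∘ u) (σ (Sum.inl i))) = b ∘ u ∘ σ ∘ Sum.inl from rfl, hzero,
      TensorProduct.zero_tmul, smul_zero]

theorem castForm_wedge_wedgeCoord_apply_basis {N k l : ℕ} (b : Module.Basis (Fin N) ℝ V)
    (h : k + l = N) (u : Fin k ⊕ Fin l ≃ Fin N) (θ : V [⋀^Fin l]→ₗ[ℝ] ℝ) :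
    castForm h (wedge (wedgeCoord b (u ∘ Sum.inl)) θ) b =
      Equiv.Perm.sign ((finSumFinEquiv.trans (finCongr h)).trans u.symm) •
        θ (b ∘ u ∘ Sum.inr) := by
  have hb : ⇑b ∘ finCongr h ∘ finSumFinEquiv =
      (⇑b ∘ u) ∘ (finSumFinEquiv.trans (finCongr h)).trans u.symm := by
    ext x; simp
  change TensorProduct.lid ℝ ℝ
    ((wedgeCoord b (u ∘ Sum.inl)).domCoprod θ (b ∘ finCongr h ∘ finSumFinEquiv)) = _
  rw [hb, AlternatingMap.map_perm, domCoprod_wedgeCoord_apply b u.injective]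
  simp

theorem exists_sumEquiv_comp_inr_eq {α β γ : Type*} [Fintype α] [Fintype β] [Fintype γ]
    (h : Fintype.card α + Fintype.card β = Fintype.card γ) {a : β → γ} (ha : Injective a) :
    ∃ u : α ⊕ β ≃ γ, u ∘ Sum.inr = a := by
  classical
  obtain ⟨g⟩ : Nonempty (α ≃ ↥(Set.range a)ᶜ) := by
    rw [← Fintype.card_eq, Fintype.card_compl_set, Set.card_range_of_injective ha]
    omega
  exact ⟨(Equiv.sumComm α β).trans
    ((Equiv.sumCongr (Equiv.ofInjective a ha) g).trans (Equiv.Set.sumCompl _)), rfl⟩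

theorem eq_zero_of_forall_castForm_wedge_apply_basis_eq_zero {N k l : ℕ}
    (b : Module.Basis (Fin N) ℝ V) (h : k + l = N) {θ : V [⋀^Fin l]→ₗ[ℝ] ℝ}
    (hθ : ∀ η : V [⋀^Fin k]→ₗ[ℝ] ℝ, castForm h (wedge η θ) b = 0) : θ = 0 := by
  refine b.ext_alternating fun a ha => ?_
  obtain ⟨u, hu⟩ := exists_sumEquiv_comp_inr_eq (α := Fin k) (by simpa using h) ha
  have := castForm_wedge_wedgeCoord_apply_basis b h u θ
  rw [hθ, hu] at this
  exact (smul_eq_zero_iff_eq _).mp this.symm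

noncomputable def wedgeDual {N k l : ℕ} (b : Module.Basis (Fin N) ℝ V) (h : k + l = N) :
    (V [⋀^Fin l]→ₗ[ℝ] ℝ) →ₗ[ℝ] Module.Dual ℝ (V [⋀^Fin k]→ₗ[ℝ] ℝ) :=
  wedgeBilin.flip.compr₂ (evalAt b ∘ₗ castHom h)

theorem wedgeDual_apply {N k l : ℕ} (b : Module.Basis (Fin N) ℝ V) (h : k + l = N)
    (θ : V [⋀^Fin l]→ₗ[ℝ] ℝ) (η : V [⋀^Fin k]→ₗ[ℝ] ℝ) :
    wedgeDual b h θ η = castForm h (wedge η θ) b :=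
  rfl

theorem wedgeDual_bijective {N k l : ℕ} (b : Module.Basis (Fin N) ℝ V) (h : k + l = N) :
    Bijective (wedgeDual b h) := by
  have : FiniteDimensional ℝ V := Module.Finite.of_basis b
  have hinj : Injective (wedgeDual b h) := by
    rw [← LinearMap.ker_eq_bot, Submodule.eq_bot_iff]
    exact fun θ hθ => eq_zero_of_forall_castForm_wedge_apply_basis_eq_zero b h
      fun η => LinearMap.congr_fun hθ η
  refine ⟨hinj, (LinearMap.injective_iff_surjective_of_finrank_eq_finrank ?_).mp hinj⟩
  rw [Subspace.dual_finrank_eq, finrank_alternatingMap, finrank_alternatingMap,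
    Module.finrank_eq_card_basis b, Fintype.card_fin, ← h, Nat.choose_symm_add]

theorem existsUnique_linearMap_wedge_eq_smul [FiniteDimensional ℝ V] {N k l : ℕ}
    (hN : Module.finrank ℝ V = N) (h : k + l = N)
    (F : (V [⋀^Fin k]→ₗ[ℝ] ℝ) →ₗ[ℝ] (V [⋀^Fin k]→ₗ[ℝ] ℝ) →ₗ[ℝ] ℝ)
    (μ : V [⋀^Fin N]→ₗ[ℝ] ℝ) :
    ∃! star : (V [⋀^Fin k]→ₗ[ℝ] ℝ) →ₗ[ℝ] (V [⋀^Fin l]→ₗ[ℝ] ℝ),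
      ∀ η ω, castForm h (wedge η (star ω)) = F ω η • μ := by
  let b := Module.finBasisOfFinrankEq ℝ V hN
  let dualEquiv := LinearEquiv.ofBijective (wedgeDual b h) (wedgeDual_bijective b h)
  have hspec : ∀ star : (V [⋀^Fin k]→ₗ[ℝ] ℝ) →ₗ[ℝ] (V [⋀^Fin l]→ₗ[ℝ] ℝ),
      wedgeDual b h ∘ₗ star = μ b • F ↔ ∀ η ω, castForm h (wedge η (star ω)) = F ω η • μ := by
    intro star
    constructor
    · intro hs η ω
      refine alternatingMap_eq_of_apply_basis_eq b ?_
      simpa [wedgeDual_apply, mul_comm] using LinearMap.congr_fun₂ hs ω η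
    · intro hs
      ext ω η
      simp [wedgeDual_apply, hs, mul_comm]
  exact (existsUnique_congr hspec).mp (dualEquiv.congrRight.bijective.existsUnique _)

/-- symplectic star operator. For each `0 ≤ k ≤ 2n` there is a unique linear
map `⋆ : Λ^k → Λ^(2n - k)` such that `η ∧ ⋆ω = (⊥^k (η ∧ ω)) • Ω^{∧n}` for all `k`-forms
`η, ω`; here the `0`-form `⊥^k (η ∧ ω)` is identified with the real number obtained by
evaluating it on the empty family. -/
theorem symplectic_star_exists_unique
    {V : Type*} [AddCommGroup V] [Module ℝ V] [FiniteDimensional ℝ V] {n : ℕ}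
    (hdim : Module.finrank ℝ V = 2 * n)
    (Ω : V [⋀^Fin 2]→ₗ[ℝ] ℝ)
    {e f : Fin n → V}
    (k : ℕ) (hk : k ≤ 2 * n) :
    ∃! star : (V [⋀^Fin k]→ₗ[ℝ] ℝ) →ₗ[ℝ] (V [⋀^Fin (2 * n - k)]→ₗ[ℝ] ℝ),
      ∀ η ω : V [⋀^Fin k]→ₗ[ℝ] ℝ,
        castForm (by omega : k + (2 * n - k) = 2 * n) (wedge η (star ω)) =
          (castForm (by omega : k + k - 2 * k = 0) (lowerIter e f k (wedge η ω)) ![]) •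
            omegaPow Ω n := by
  have h := existsUnique_linearMap_wedge_eq_smul hdim (by omega : k + (2 * n - k) = 2 * n)
    (wedgeBilin.flip.compr₂ (evalAt ![] ∘ₗ castHom (by omega) ∘ₗ lowerIterHom e f k (k + k)))
    (omegaPow Ω n)
  simpa only [LinearMap.compr₂_apply, LinearMap.flip_apply, LinearMap.comp_apply,
    lowerIterHom_apply, wedgeBilin_apply, castHom_apply, evalAt_apply] using h

end SymplSS
end
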